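/- Let n ≥ 1 and let γₙ : [a, b] → ℝ × ℝⁿ be future-directed causal curves parametrized by Euclidean arclength which converge pointwise on [a, b] to a map γ : [a, b] → ℝ × ℝⁿ. Then γ is a future-directed causal curve; more precisely, for all t₁ < t₂ in [a, b] one has γ(t₂) − γ(t₁) ∈ C and γ⁰(t₂) − γ⁰(t₁) ≥ (t₂ − t₁)/√2 > 0, where γ⁰ is the time component. (This is the Minkowski-space instance of Lemma 2.7 of the paper: limits of continuous causal curves are continuous causal curves.) -/

import Mathlib

open Filter Set
open scoped BigOperators ENNReal

noncomputable section

/-- Minkowski space modeled as `ℝ × ℝⁿ` with the Euclidean norm,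
i.e. `EuclideanSpace ℝ (Fin (n+1))` with time component `x 0`. -/
abbrev Mink (n : ℕ) : Type := EuclideanSpace ℝ (Fin (n + 1))

/-- The closed future causal cone `C = {x : x⁰ ≥ ‖x̄‖}`. -/
def causalCone (n : ℕ) : Set (Mink n) :=
  {x | Real.sqrt (∑ i : Fin n, x i.succ ^ 2) ≤ x 0}

/-- `γ` is a future-directed causal curve on the set `s`: all increments lie in the
closed future causal cone and the curve is injective in the causal sense. -/
def FDCausal (n : ℕ) (γ : ℝ → Mink n) (s : Set ℝ) : Prop :=
  ∀ ⦃t₁⦄, t₁ ∈ s → ∀ ⦃t₂⦄, t₂ ∈ s → t₁ < t₂ →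
    γ t₂ - γ t₁ ∈ causalCone n ∧ γ t₂ ≠ γ t₁

/-!
In the cone the spatial part is dominated by the time part, so `‖x‖ ≤ √2 · x⁰`. Hence the
Euclidean length of a causal curve is at most `√2` times the increase of its time component,
and for curves parametrized by arclength this gives `t₂ - t₁ ≤ √2 (γ⁰(t₂) - γ⁰(t₁))`. Both this
bound and membership in the (closed) cone pass to pointwise limits, and the strict increase of
the time component makes the limit curve injective.
-/

section EVariation

variable {α E F : Type*} [LinearOrder α] [PseudoEMetricSpace E] [PseudoEMetricSpace F]

theorem eVariationOn_le_mul_of_edist_le {f : α → E} {g : α → F} {s : Set α} {C : ℝ≥0∞}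
    (h : ∀ ⦃x⦄, x ∈ s → ∀ ⦃y⦄, y ∈ s → x ≤ y → edist (f y) (f x) ≤ C * edist (g y) (g x)) :
    eVariationOn f s ≤ C * eVariationOn g s := by
  refine iSup_le fun ⟨k, u, hu, us⟩ => ?_
  calc ∑ i ∈ Finset.range k, edist (f (u (i + 1))) (f (u i))
      ≤ ∑ i ∈ Finset.range k, C * edist (g (u (i + 1))) (g (u i)) :=
        Finset.sum_le_sum fun i _ => h (us i) (us (i + 1)) (hu i.le_succ)
    _ = C * ∑ i ∈ Finset.range k, edist (g (u (i + 1))) (g (u i)) := (Finset.mul_sum ..).symm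
    _ ≤ C * eVariationOn g s := by grw [eVariationOn.sum_le hu us]

end EVariation

variable {n : ℕ}

theorem time_nonneg_of_mem_causalCone {x : Mink n} (hx : x ∈ causalCone n) : 0 ≤ x 0 :=
  (Real.sqrt_nonneg _).trans hx

theorem norm_le_sqrt_two_mul_time_of_mem_causalCone {x : Mink n} (hx : x ∈ causalCone n) :
    ‖x‖ ≤ √2 * x 0 := by
  have h0 := time_nonneg_of_mem_causalCone hx
  have hspace : ∑ i : Fin n, x i.succ ^ 2 ≤ x 0 ^ 2 := (Real.sqrt_le_iff.1 hx).2
  rw [EuclideanSpace.norm_eq, Real.sqrt_le_iff, Fin.sum_univ_succ]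
  refine ⟨by positivity, ?_⟩
  simp only [Real.norm_eq_abs, sq_abs, mul_pow, Real.sq_sqrt zero_le_two]
  linarith

theorem isClosed_causalCone (n : ℕ) : IsClosed (causalCone n) :=
  isClosed_le (by fun_prop) (PiLp.continuous_apply 2 _ 0)

def IsCausalOn (n : ℕ) (γ : ℝ → Mink n) (s : Set ℝ) : Prop :=
  ∀ ⦃t₁⦄, t₁ ∈ s → ∀ ⦃t₂⦄, t₂ ∈ s → t₁ < t₂ → γ t₂ - γ t₁ ∈ causalCone n

theorem FDCausal.isCausalOn {γ : ℝ → Mink n} {s : Set ℝ} (h : FDCausal n γ s) :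
    IsCausalOn n γ s :=
  fun _ h₁ _ h₂ h₁₂ => (h h₁ h₂ h₁₂).1

namespace IsCausalOn

variable {γ : ℝ → Mink n} {s : Set ℝ}

theorem mono {t : Set ℝ} (h : IsCausalOn n γ s) (hts : t ⊆ s) : IsCausalOn n γ t :=
  fun _ h₁ _ h₂ h₁₂ => h (hts h₁) (hts h₂) h₁₂

theorem monotoneOn_time (h : IsCausalOn n γ s) : MonotoneOn (fun t => γ t 0) s := by
  intro u hu v hv huv
  rcases huv.eq_or_lt with rfl | hlt
  · rfl
  · simpa using time_nonneg_of_mem_causalCone (h hu hv hlt)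

theorem eVariationOn_le_sqrt_two_mul_time (h : IsCausalOn n γ s) :
    eVariationOn γ s ≤ ENNReal.ofReal √2 * eVariationOn (fun t => γ t 0) s := by
  refine eVariationOn_le_mul_of_edist_le fun u hu v hv huv => ?_
  rcases huv.eq_or_lt with rfl | hlt
  · simp
  have hcone := h hu hv hlt
  have htime : 0 ≤ γ v 0 - γ u 0 := by simpa using time_nonneg_of_mem_causalCone hcone
  rw [edist_dist, edist_dist, dist_eq_norm, Real.dist_eq, abs_of_nonneg htime,
    ← ENNReal.ofReal_mul (Real.sqrt_nonneg 2)]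
  exact ENNReal.ofReal_le_ofReal (by simpa using norm_le_sqrt_two_mul_time_of_mem_causalCone hcone)

theorem sub_le_sqrt_two_mul_time_sub {a b : ℝ} (h : IsCausalOn n γ (Icc a b)) (hab : a ≤ b)
    (harc : eVariationOn γ (Icc a b) = ENNReal.ofReal (b - a)) :
    b - a ≤ √2 * (γ b 0 - γ a 0) := by
  have htime := h.monotoneOn_time.eVariationOn_eq (left_mem_Icc.2 hab) (right_mem_Icc.2 hab)
  rw [inter_self] at htime
  have hvar := h.eVariationOn_le_sqrt_two_mul_time
  rw [harc, htime, ← ENNReal.ofReal_mul (Real.sqrt_nonneg 2)] at hvar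
  have hΔ : 0 ≤ γ b 0 - γ a 0 := sub_nonneg.2 <|
    h.monotoneOn_time (left_mem_Icc.2 hab) (right_mem_Icc.2 hab) hab
  exact (ENNReal.ofReal_le_ofReal_iff (mul_nonneg (Real.sqrt_nonneg 2) hΔ)).1 hvar

theorem of_tendsto {ι : Type*} {l : Filter ι} [l.NeBot] {γs : ι → ℝ → Mink n}
    (h : ∀ i, IsCausalOn n (γs i) s)
    (hconv : ∀ t ∈ s, Tendsto (fun i => γs i t) l (nhds (γ t))) : IsCausalOn n γ s :=
  fun _ h₁ _ h₂ h₁₂ => (isClosed_causalCone n).mem_of_tendsto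
    ((hconv _ h₂).sub (hconv _ h₁)) (Eventually.of_forall fun i => h i h₁ h₂ h₁₂)

end IsCausalOn

theorem limit_of_causal_arclength_curves_general (n : ℕ) (a b : ℝ)
    (γseq : ℕ → ℝ → Mink n) (γ : ℝ → Mink n)
    (hcausal : ∀ m, FDCausal n (γseq m) (Set.Icc a b))
    (harc : ∀ m, ∀ ⦃s s'⦄, s ∈ Set.Icc a b → s' ∈ Set.Icc a b → s ≤ s' →
      eVariationOn (γseq m) (Set.Icc s s') = ENNReal.ofReal (s' - s))
    (hconv : ∀ t ∈ Set.Icc a b,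
      Filter.Tendsto (fun m => γseq m t) Filter.atTop (nhds (γ t))) :
    FDCausal n γ (Set.Icc a b) ∧
      ∀ ⦃t₁⦄, t₁ ∈ Set.Icc a b → ∀ ⦃t₂⦄, t₂ ∈ Set.Icc a b → t₁ < t₂ →
        γ t₂ - γ t₁ ∈ causalCone n ∧
        (t₂ - t₁) / Real.sqrt 2 ≤ γ t₂ 0 - γ t₁ 0 ∧
        0 < (t₂ - t₁) / Real.sqrt 2 := by
  have hcone : IsCausalOn n γ (Icc a b) :=
    IsCausalOn.of_tendsto (fun m => (hcausal m).isCausalOn) hconv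
  have htime : ∀ ⦃t₁⦄, t₁ ∈ Icc a b → ∀ ⦃t₂⦄, t₂ ∈ Icc a b → t₁ < t₂ →
      (t₂ - t₁) / √2 ≤ γ t₂ 0 - γ t₁ 0 := by
    intro t₁ h₁ t₂ h₂ h₁₂
    have hbound : ∀ m, (t₂ - t₁) / √2 ≤ γseq m t₂ 0 - γseq m t₁ 0 := fun m => by
      rw [div_le_iff₀' (by positivity)]
      exact ((hcausal m).isCausalOn.mono (Icc_subset_Icc h₁.1 h₂.2)).sub_le_sqrt_two_mul_time_sub
        h₁₂.le (harc m h₁ h₂ h₁₂.le)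
    have hπ : Continuous fun x : Mink n => x 0 := PiLp.continuous_apply 2 _ 0
    exact ge_of_tendsto' (((hπ.tendsto _).comp (hconv t₂ h₂)).sub
      ((hπ.tendsto _).comp (hconv t₁ h₁))) hbound
  have hpos : ∀ ⦃t₁ t₂ : ℝ⦄, t₁ < t₂ → 0 < (t₂ - t₁) / √2 :=
    fun _ _ h₁₂ => div_pos (sub_pos.2 h₁₂) (by positivity)
  refine ⟨fun t₁ h₁ t₂ h₂ h₁₂ => ⟨hcone h₁ h₂ h₁₂, fun heq => ?_⟩,
    fun t₁ h₁ t₂ h₂ h₁₂ => ⟨hcone h₁ h₂ h₁₂, htime h₁ h₂ h₁₂, hpos h₁₂⟩⟩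
  have := htime h₁ h₂ h₁₂
  rw [heq, sub_self] at this
  exact (hpos h₁₂).not_ge this

/-- A pointwise limit of future-directed causal curves parametrized by Euclidean
arclength is a future-directed causal curve; moreover every increment lies in the cone
and the time component increases at least by `(t₂ − t₁)/√2 > 0`. -/
theorem limit_of_causal_arclength_curves (n : ℕ) (hn : 1 ≤ n) (a b : ℝ)
    (γseq : ℕ → ℝ → Mink n) (γ : ℝ → Mink n)
    (hcausal : ∀ m, FDCausal n (γseq m) (Set.Icc a b))
    (harc : ∀ m, ∀ ⦃s s'⦄, s ∈ Set.Icc a b → s' ∈ Set.Icc a b → s ≤ s' →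
      eVariationOn (γseq m) (Set.Icc s s') = ENNReal.ofReal (s' - s))
    (hconv : ∀ t ∈ Set.Icc a b,
      Filter.Tendsto (fun m => γseq m t) Filter.atTop (nhds (γ t))) :
    FDCausal n γ (Set.Icc a b) ∧
      ∀ ⦃t₁⦄, t₁ ∈ Set.Icc a b → ∀ ⦃t₂⦄, t₂ ∈ Set.Icc a b → t₁ < t₂ →
        γ t₂ - γ t₁ ∈ causalCone n ∧
        (t₂ - t₁) / Real.sqrt 2 ≤ γ t₂ 0 - γ t₁ 0 ∧
        0 < (t₂ - t₁) / Real.sqrt 2 :=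
  limit_of_causal_arclength_curves_general n a b γseq γ hcausal harc hconv
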